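/- Let x_1,…,x_n ∈ ℝ³, let Γ be a symmetric positive semidefinite 3×3 real matrix, and let w(t) = (2π)^{-3/2} e^{-t^T t / 2} be the standard Gaussian density on ℝ³. Then ∫_{ℝ³} |(1/n) Σ_{j=1}^n e^{i⟨t,x_j⟩} − e^{-t^T Γ t / 2}|² w(t) dt = (det((2Γ + I)^{-1}))^{1/2} + (1/n²) Σ_{j=1}^n Σ_{k=1}^n exp(−½ (x_j − x_k)^T (x_j − x_k)) − 2 (det((Γ + I)^{-1}))^{1/2} (1/n) Σ_{j=1}^n exp(−½ x_j^T (Γ + I)^{-1} x_j). -/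

import Mathlib

open MeasureTheory Filter RealInnerProductSpace Matrix

noncomputable section GaussAux

namespace GaussAux

abbrev E3 := EuclideanSpace ℝ (Fin 3)

def QF (M : Matrix (Fin 3) (Fin 3) ℝ) (t : E3) : ℝ := ∑ i, ∑ j, t i * M i j * t j

def gw (M : Matrix (Fin 3) (Fin 3) ℝ) (x : E3) (t : E3) : ℂ :=
  Complex.exp (Complex.I * (⟪t, x⟫ : ℝ) - (QF M t : ℝ) / 2) *
    (((2 * Real.pi) ^ (-(3 : ℝ) / 2) * Real.exp (-(∑ i, t i * t i) / 2) : ℝ) : ℂ)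

lemma qf_eq (M : Matrix (Fin 3) (Fin 3) ℝ) (μ : Fin 3 → ℝ)
    (B : OrthonormalBasis (Fin 3) ℝ E3)
    (h : ∀ j, M *ᵥ ⇑(B j) = μ j • ⇑(B j)) (v : E3) :
    QF M v = ∑ i, μ i * (B.repr v i) ^ 2 := by
  set s : Fin 3 → ℝ := fun i => B.repr v i with hs
  have hv : ∀ i, v i = ∑ a, s a * B a i := by
    intro i
    conv_lhs => rw [← B.sum_repr v]
    rw [show ((∑ a, B.repr v a • B a : E3) i)
        = EuclideanSpace.projₗ (𝕜 := ℝ) i (∑ a, B.repr v a • B a) from rfl, map_sum]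
    simp [smul_eq_mul, hs]
  have hfun : (fun i => v i) = ∑ a, s a • ⇑(B a) := by
    funext i
    rw [hv i]
    simp [Finset.sum_apply, smul_eq_mul]
  have hMv : ∀ i, (M *ᵥ fun i => v i) i = ∑ a, s a * (μ a * B a i) := by
    intro i
    have : (M *ᵥ fun i => v i) = ∑ a, s a • (M *ᵥ ⇑(B a)) := by
      rw [hfun]
      simp only [← Matrix.mulVecLin_apply, map_sum]
      simp only [_root_.map_smul]
    rw [this]
    simp [h, Finset.sum_apply, mul_assoc]
  have horth : ∀ a b, ∑ i, B a i * B b i = if a = b then 1 else 0 := by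
    intro a b
    have := orthonormal_iff_ite.mp B.orthonormal a b
    simpa [PiLp.inner_apply, RCLike.inner_apply, mul_comm] using this
  have key : QF M v = ∑ i, v i * (M *ᵥ fun i => v i) i := by
    unfold QF
    congr 1; ext i
    simp [Matrix.mulVec, dotProduct, Finset.mul_sum, mul_assoc]
  rw [key]
  calc ∑ i, v i * (M *ᵥ fun i => v i) i
      = ∑ i, (∑ a, s a * B a i) * (∑ b, s b * (μ b * B b i)) := by
        refine Finset.sum_congr rfl fun i _ => ?_
        rw [hv i, hMv i]
    _ = ∑ a, ∑ b, (s a * (s b * μ b)) * ∑ i, B a i * B b i := by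
        simp_rw [Finset.sum_mul_sum, Finset.mul_sum]
        rw [Finset.sum_comm]
        congr 1; ext a; rw [Finset.sum_comm]; congr 1; ext b; congr 1; ext i; ring
    _ = ∑ a, μ a * s a ^ 2 := by
        simp_rw [horth, mul_ite, mul_one, mul_zero]
        simp
        refine Finset.sum_congr rfl fun a _ => by ring

lemma qf_nonneg {M : Matrix (Fin 3) (Fin 3) ℝ} (hM : M.PosSemidef) (t : E3) :
    0 ≤ QF M t := by
  have := hM.dotProduct_mulVec_nonneg (fun i => t i)
  simpa [QF, dotProduct, Matrix.mulVec, Finset.mul_sum, mul_assoc] using this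

lemma sum_sq_eq_norm (t : E3) : ∑ i, t i * t i = ‖t‖ ^ 2 := by
  rw [← real_inner_self_eq_norm_sq]
  simp only [PiLp.inner_apply, RCLike.inner_apply, conj_trivial]

lemma w0_integrable :
    Integrable (fun t : E3 =>
      (2 * Real.pi) ^ (-(3 : ℝ) / 2) * Real.exp (-(∑ i, t i * t i) / 2)) := by
  apply Integrable.const_mul
  have h : Integrable (fun v : E3 =>
      Complex.exp (-(1/2 : ℂ) * ‖v‖ ^ 2 + 0 * ⟪(0 : E3), v⟫)) :=
    GaussianFourier.integrable_cexp_neg_mul_sq_norm_add (by norm_num) 0 0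
  refine h.norm.congr (Eventually.of_forall fun t => ?_)
  simp only [Complex.norm_exp, Complex.add_re, Complex.zero_re,
    Complex.mul_re, Complex.neg_re, Complex.ofReal_re, Complex.ofReal_im, Complex.zero_im]
  rw [sum_sq_eq_norm t]
  norm_num
  simp [← Complex.ofReal_pow]
  ring

lemma gw_continuous (M : Matrix (Fin 3) (Fin 3) ℝ) (x : E3) : Continuous (gw M x) := by
  have happ : ∀ i : Fin 3, Continuous fun t : E3 => t i :=
    fun i => (EuclideanSpace.proj (𝕜 := ℝ) i).continuous
  have h1 : Continuous fun t : E3 => (⟪t, x⟫ : ℝ) :=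
    Continuous.inner continuous_id continuous_const
  have hQ : Continuous (QF M) := by
    unfold QF
    exact continuous_finset_sum _ fun i _ => continuous_finset_sum _ fun j _ =>
      ((happ i).mul continuous_const).mul (happ j)
  have hs : Continuous fun t : E3 => ∑ i, t i * t i :=
    continuous_finset_sum _ fun i _ => (happ i).mul (happ i)
  unfold gw
  exact (Complex.continuous_exp.comp
      ((continuous_const.mul (Complex.continuous_ofReal.comp h1)).sub
        ((Complex.continuous_ofReal.comp hQ).div_const 2))).mul
    (Complex.continuous_ofReal.comp
      (continuous_const.mul (Real.continuous_exp.comp (hs.neg.div_const 2))))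

lemma gw_integrable (M : Matrix (Fin 3) (Fin 3) ℝ) (hM : M.PosSemidef) (x : E3) :
    Integrable (gw M x) := by
  refine Integrable.mono w0_integrable (gw_continuous M x).aestronglyMeasurable
    (Eventually.of_forall fun t => ?_)
  unfold gw
  rw [norm_mul, Complex.norm_exp]
  have h1 : (Complex.I * (⟪t, x⟫ : ℝ) - (QF M t : ℝ) / 2).re = -(QF M t) / 2 := by
    simp [Complex.sub_re, Complex.mul_re, Complex.div_re]
    ring
  rw [h1]
  have h2 : Real.exp (-QF M t / 2) ≤ 1 := by
    rw [Real.exp_le_one_iff]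
    have := qf_nonneg hM t
    linarith
  calc Real.exp (-QF M t / 2) * ‖(((2 * Real.pi) ^ (-(3 : ℝ) / 2) *
        Real.exp (-(∑ i, t i * t i) / 2) : ℝ) : ℂ)‖
      ≤ 1 * ‖(((2 * Real.pi) ^ (-(3 : ℝ) / 2) *
        Real.exp (-(∑ i, t i * t i) / 2) : ℝ) : ℂ)‖ := by
        apply mul_le_mul_of_nonneg_right h2 (norm_nonneg _)
    _ = ‖(2 * Real.pi) ^ (-(3 : ℝ) / 2) * Real.exp (-(∑ i, t i * t i) / 2)‖ := by
        rw [one_mul, Complex.norm_real]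

lemma master (M : Matrix (Fin 3) (Fin 3) ℝ) (hM : M.PosSemidef) (x : E3) :
    (∫ t : E3, gw M x t) =
      ((Real.sqrt ((M + 1)⁻¹.det) *
        Real.exp (-(∑ a, ∑ b, x a * (M + 1)⁻¹ a b * x b) / 2) : ℝ) : ℂ) := by
  have hH : M.IsHermitian := hM.1
  set d : Fin 3 → ℝ := hH.eigenvalues with hd_def
  set B := hH.eigenvectorBasis with hB_def
  set U : Matrix (Fin 3) (Fin 3) ℝ := ↑(hH.eigenvectorUnitary) with hU_def
  have hd : ∀ i, 0 ≤ d i := fun i => hM.eigenvalues_nonneg i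
  have hd1 : ∀ i, (0:ℝ) < d i + 1 := fun i => by linarith [hd i]
  have hUU : U * star U = 1 := (Matrix.mem_unitaryGroup_iff).mp (hH.eigenvectorUnitary).2
  have hUU' : star U * U = 1 := (Matrix.mem_unitaryGroup_iff').mp (hH.eigenvectorUnitary).2
  have hsp : M = U * diagonal d * star U := by
    have := hH.spectral_theorem
    simpa using this
  have hdd : diagonal (fun i => d i + 1) = diagonal d + 1 := by
    rw [← Matrix.diagonal_one, Matrix.diagonal_add]
  have hM1 : M + 1 = U * diagonal (fun i => d i + 1) * star U := by
    rw [hdd, Matrix.mul_add, Matrix.mul_one, Matrix.add_mul, hUU, ← hsp]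
  have hDD : diagonal (fun i => d i + 1) * diagonal (fun i => (d i + 1)⁻¹) = 1 := by
    rw [Matrix.diagonal_mul_diagonal,
      show (fun i => (d i + 1) * (d i + 1)⁻¹) = fun _ => (1:ℝ) from
        funext fun i => mul_inv_cancel₀ (hd1 i).ne', Matrix.diagonal_one]
  have hinv : (M + 1)⁻¹ = U * diagonal (fun i => (d i + 1)⁻¹) * star U := by
    apply Matrix.inv_eq_right_inv
    rw [hM1]
    calc (U * diagonal (fun i => d i + 1) * star U) *
          (U * diagonal (fun i => (d i + 1)⁻¹) * star U)
        = U * (diagonal (fun i => d i + 1) * ((star U * U) *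
            (diagonal (fun i => (d i + 1)⁻¹) * star U))) := by
          simp only [Matrix.mul_assoc]
      _ = U * (diagonal (fun i => d i + 1) * (diagonal (fun i => (d i + 1)⁻¹) * star U)) := by
          rw [hUU', Matrix.one_mul]
      _ = (U * 1) * star U := by
          rw [← Matrix.mul_assoc (diagonal _), hDD]
          simp only [Matrix.mul_assoc, Matrix.one_mul, Matrix.mul_one]
      _ = 1 := by rw [Matrix.mul_one, hUU]
  have hdet : (M + 1)⁻¹.det = ∏ i, (d i + 1)⁻¹ := by
    have h1 : U.det * (star U).det = 1 := by rw [← Matrix.det_mul, hUU, Matrix.det_one]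
    rw [hinv, Matrix.det_mul, Matrix.det_mul, Matrix.det_diagonal]
    calc U.det * (∏ i, (d i + 1)⁻¹) * (star U).det
        = (∏ i, (d i + 1)⁻¹) * (U.det * (star U).det) := by ring
      _ = ∏ i, (d i + 1)⁻¹ := by rw [h1, mul_one]
  have hBe : ∀ j, M *ᵥ ⇑(B j) = d j • ⇑(B j) := fun j => hH.mulVec_eigenvectorBasis j
  have hBinv : ∀ j, (M + 1)⁻¹ *ᵥ ⇑(B j) = (d j + 1)⁻¹ • ⇑(B j) := by
    intro j
    rw [hinv, ← Matrix.mulVec_mulVec, ← Matrix.mulVec_mulVec]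
    rw [show (star U) *ᵥ ⇑(B j) = Pi.single j 1 from hH.star_eigenvectorUnitary_mulVec j]
    rw [Matrix.diagonal_mulVec_single]
    rw [show (Pi.single j ((d j + 1)⁻¹ * 1) : Fin 3 → ℝ)
        = (d j + 1)⁻¹ • (Pi.single j 1 : Fin 3 → ℝ) by
      funext i
      simp [Pi.single_apply]]
    rw [Matrix.mulVec_smul]
    rw [show U *ᵥ Pi.single j 1 = ⇑(B j) from hH.eigenvectorUnitary_mulVec j]
  set y : Fin 3 → ℝ := fun i => B.repr x i with hy_def
  have hQt : ∀ t, QF M t = ∑ i, d i * (B.repr t i) ^ 2 := qf_eq M d B hBe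
  have hQx : QF (M + 1)⁻¹ x = ∑ i, (d i + 1)⁻¹ * (y i) ^ 2 :=
    qf_eq (M + 1)⁻¹ _ B hBinv x
  set C : ℝ := (2 * Real.pi) ^ (-(3:ℝ)/2) with hC_def
  set b : Fin 3 → ℂ := fun i => (((d i + 1)/2 : ℝ) : ℂ) with hb_def
  set c : Fin 3 → ℂ := fun i => Complex.I * (y i : ℂ) with hc_def
  have hb : ∀ i, 0 < (b i).re := by
    intro i
    simp only [hb_def, Complex.ofReal_re]
    linarith [hd1 i]
  -- pointwise identity after the orthogonal change of variables
  have hpt : ∀ s : E3, gw M x (B.repr.symm s) =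
      (C : ℂ) * Complex.exp (-∑ i, b i * (s i : ℂ) ^ 2 + ∑ i, c i * (s i : ℂ)) := by
    intro s
    have e1 : (⟪B.repr.symm s, x⟫ : ℝ) = ∑ i, s i * y i := by
      rw [← LinearIsometryEquiv.inner_map_map B.repr (B.repr.symm s) x]
      simp [PiLp.inner_apply, RCLike.inner_apply, hy_def, mul_comm]
    have e2 : QF M (B.repr.symm s) = ∑ i, d i * (s i) ^ 2 := by
      rw [hQt]
      simp
    have e3 : (∑ i, (B.repr.symm s : E3) i * (B.repr.symm s : E3) i) = ∑ i, s i * s i := by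
      rw [sum_sq_eq_norm, LinearIsometryEquiv.norm_map, ← sum_sq_eq_norm]
    unfold gw
    rw [e2, e3, e1]
    rw [Complex.ofReal_mul, Complex.ofReal_exp]
    rw [mul_left_comm, ← Complex.exp_add]
    congr 1
    push_cast
    simp only [Finset.mul_sum, ← Finset.sum_neg_distrib, Finset.sum_div, neg_div,
      ← Finset.sum_add_distrib, ← Finset.sum_sub_distrib]
    congr 1
    refine Finset.sum_congr rfl fun i _ => ?_
    simp only [hb_def, hc_def]
    push_cast
    ring
  -- change of variables
  have hcv : (∫ t : E3, gw M x t) = ∫ s : E3, gw M x (B.repr.symm s) :=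
    (B.measurePreserving_repr_symm.integral_comp
      (B.repr.symm.toHomeomorph.measurableEmbedding) (gw M x)).symm
  rw [hcv]
  simp_rw [hpt]
  -- transfer to the product space
  have hmp := (EuclideanSpace.volume_preserving_symm_measurableEquiv_toLp (Fin 3)).symm
  rw [← hmp.integral_comp (MeasurableEquiv.measurableEmbedding _)]
  have hco : ∀ v : Fin 3 → ℝ,
      (fun s : E3 => (C : ℂ) * Complex.exp (-∑ i, b i * (s i : ℂ) ^ 2 + ∑ i, c i * (s i : ℂ)))
        ((MeasurableEquiv.toLp 2 (Fin 3 → ℝ)).symm.symm v)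
      = (C : ℂ) * Complex.exp (-∑ i, b i * (v i : ℂ) ^ 2 + ∑ i, c i * (v i : ℂ)) := by
    intro v
    rfl
  simp_rw [hco]
  rw [integral_const_mul]
  rw [GaussianFourier.integral_cexp_neg_sum_mul_add hb c]
  -- evaluate the product
  have hfac : ∀ i : Fin 3, (↑Real.pi / b i) ^ ((1:ℂ)/2) * Complex.exp (c i ^ 2 / (4 * b i))
      = (((2 * Real.pi) ^ ((1:ℝ)/2) *
          (Real.sqrt ((d i + 1)⁻¹) * Real.exp (-((d i + 1)⁻¹ * (y i) ^ 2) / 2)) : ℝ) : ℂ) := by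
    intro i
    have h2 : (↑Real.pi / b i) = (((2 * Real.pi) * (d i + 1)⁻¹ : ℝ) : ℂ) := by
      rw [hb_def, ← Complex.ofReal_div]
      congr 1
      field_simp
    have h3 : c i ^ 2 / (4 * b i) = ((-((d i + 1)⁻¹ * (y i) ^ 2) / 2 : ℝ) : ℂ) := by
      rw [hc_def, hb_def, mul_pow, Complex.I_sq]
      push_cast
      have : ((d i : ℂ) + 1) ≠ 0 := by
        have := hd1 i
        exact_mod_cast (by exact_mod_cast this.ne' : ((d i + 1 : ℝ) : ℂ) ≠ 0)
      field_simp
      ring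
    rw [h2, h3, ← Complex.ofReal_exp]
    rw [show ((1:ℂ)/2) = (((1:ℝ)/2 : ℝ) : ℂ) by norm_num]
    rw [← Complex.ofReal_cpow (mul_nonneg (by positivity) (inv_nonneg.mpr (hd1 i).le))]
    rw [← Complex.ofReal_mul]
    congr 1
    rw [Real.mul_rpow (by positivity) (inv_nonneg.mpr (hd1 i).le)]
    rw [Real.sqrt_eq_rpow]
    ring
  simp_rw [hfac]
  rw [← Complex.ofReal_prod, ← Complex.ofReal_mul]
  congr 1
  -- now pure real arithmetic
  rw [Finset.prod_mul_distrib, Finset.prod_const, Finset.prod_mul_distrib]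
  have hcard : (Finset.univ : Finset (Fin 3)).card = 3 := by simp
  rw [hcard]
  have hpow : ((2 * Real.pi) ^ ((1:ℝ)/2)) ^ (3:ℕ) = (2 * Real.pi) ^ ((3:ℝ)/2) := by
    rw [← Real.rpow_natCast ((2 * Real.pi) ^ ((1:ℝ)/2)) 3, ← Real.rpow_mul (by positivity)]
    norm_num
  have hCpow : C * (2 * Real.pi) ^ ((3:ℝ)/2) = 1 := by
    rw [hC_def, ← Real.rpow_add (by positivity),
      show (-(3:ℝ)/2 + 3/2) = 0 by norm_num, Real.rpow_zero]
  have h0 : ∀ i, (0:ℝ) ≤ (d i + 1)⁻¹ := fun i => inv_nonneg.mpr (hd1 i).le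
  have hsqrt : (∏ i, Real.sqrt ((d i + 1)⁻¹)) = Real.sqrt ((M + 1)⁻¹.det) := by
    rw [hdet, Fin.prod_univ_three, Fin.prod_univ_three]
    rw [← Real.sqrt_mul (h0 0), ← Real.sqrt_mul (mul_nonneg (h0 0) (h0 1))]
  have hexp : (∏ i, Real.exp (-((d i + 1)⁻¹ * (y i) ^ 2) / 2))
      = Real.exp (-(∑ a, ∑ b, x a * (M + 1)⁻¹ a b * x b) / 2) := by
    rw [← Real.exp_sum]
    congr 1
    have : (∑ a, ∑ b, x a * (M + 1)⁻¹ a b * x b) = QF (M + 1)⁻¹ x := rfl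
    rw [this, hQx, neg_div, ← Finset.sum_div, Finset.sum_neg_distrib]
    simp [neg_div]
  rw [hpow, hsqrt, hexp, ← mul_assoc, hCpow, one_mul]


lemma psd_zero : (0 : Matrix (Fin 3) (Fin 3) ℝ).PosSemidef := by
  constructor
  · simp [Matrix.IsHermitian]
  · intro v
    simp

lemma psd_two_smul {Γ : Matrix (Fin 3) (Fin 3) ℝ} (hΓ : Γ.PosSemidef) :
    (2 • Γ).PosSemidef := by
  rw [two_smul]
  exact hΓ.add hΓ

lemma qf_two_smul (Γ : Matrix (Fin 3) (Fin 3) ℝ) (t : E3) :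
    QF (2 • Γ) t = 2 * QF Γ t := by
  unfold QF
  rw [Finset.mul_sum]
  refine Finset.sum_congr rfl fun i _ => ?_
  rw [Finset.mul_sum]
  refine Finset.sum_congr rfl fun j _ => ?_
  simp [Matrix.smul_apply]
  ring

end GaussAux
end GaussAux

open GaussAux

/-- closed-form evaluation of the oracle criterion for a Gaussian block
characteristic function `e^{-tᵀΓt/2}` with standard Gaussian weight on `ℝ³`. -/
theorem gaussian_oracle_criterion_closed_form
    (n : ℕ) (hn : 0 < n) (x : Fin n → EuclideanSpace ℝ (Fin 3))
    (Γ : Matrix (Fin 3) (Fin 3) ℝ) (hΓsymm : Γ.IsSymm) (hΓ : Γ.PosSemidef)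
    (w : EuclideanSpace ℝ (Fin 3) → ℝ)
    (hw : ∀ t, w t = (2 * Real.pi) ^ (-(3 : ℝ) / 2) * Real.exp (-(∑ i, t i * t i) / 2)) :
    ∫ t : EuclideanSpace ℝ (Fin 3),
        (‖(n : ℂ)⁻¹ * ∑ j, Complex.exp (Complex.I * (⟪t, x j⟫ : ℝ))
            - Complex.exp (-(∑ i, ∑ j, t i * Γ i j * t j : ℝ) / 2)‖ ^ 2) * w t
      = Real.sqrt ((2 • Γ + 1)⁻¹.det)
        + (n : ℝ)⁻¹ ^ 2 * ∑ j, ∑ k,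
            Real.exp (-(⟪x j - x k, x j - x k⟫ : ℝ) / 2)
        - 2 * Real.sqrt ((Γ + 1)⁻¹.det) * (n : ℝ)⁻¹ *
            ∑ j, Real.exp (-(∑ a, ∑ b, x j a * (Γ + 1)⁻¹ a b * x j b) / 2) := by
  classical
  set F : E3 → ℂ := fun t =>
    (n : ℂ)⁻¹ ^ 2 * (∑ j, ∑ k, gw 0 (x j - x k) t)
      - (n : ℂ)⁻¹ * ((∑ j, gw Γ (x j) t) + (∑ j, gw Γ (-(x j)) t))
      + gw (2 • Γ) 0 t with hF_def
  -- pointwise identity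
  have hpt : ∀ t : E3,
      (‖(n : ℂ)⁻¹ * ∑ j, Complex.exp (Complex.I * (⟪t, x j⟫ : ℝ))
        - Complex.exp (-(∑ i, ∑ j, t i * Γ i j * t j : ℝ) / 2)‖ ^ 2) * w t
      = (F t).re := by
    intro t
    rw [hw t]
    set W : ℝ := (2 * Real.pi) ^ (-(3 : ℝ) / 2) * Real.exp (-(∑ i, t i * t i) / 2) with hW_def
    set e : Fin n → ℂ := fun j => Complex.exp (Complex.I * (⟪t, x j⟫ : ℝ)) with he_def
    set e' : Fin n → ℂ := fun j => Complex.exp (-Complex.I * (⟪t, x j⟫ : ℝ)) with he'_def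
    set g : ℂ := Complex.exp (-(∑ i, ∑ j, t i * Γ i j * t j : ℝ) / 2) with hg_def
    set z : ℂ := (n : ℂ)⁻¹ * ∑ j, e j - g with hz_def
    have hnorm : ‖z‖ ^ 2 * W = (z * (starRingEnd ℂ) z * (W : ℂ)).re := by
      rw [Complex.mul_conj, ← Complex.ofReal_mul, Complex.ofReal_re, Complex.normSq_eq_norm_sq]
    rw [hnorm]
    congr 1
    have hconj : (starRingEnd ℂ) z = (n : ℂ)⁻¹ * ∑ j, e' j - g := by
      rw [hz_def, map_sub, _root_.map_mul, map_sum]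
      congr 1
      · congr 1
        · simp
        · refine Finset.sum_congr rfl fun j _ => ?_
          rw [he_def, he'_def, ← Complex.exp_conj]
          congr 1
          simp [Complex.conj_ofReal]
      · rw [hg_def, ← Complex.exp_conj]
        congr 1
        simp [map_neg, map_div₀, Complex.conj_ofReal, Complex.conj_ofNat]
    rw [hconj]
    have expand : ((n : ℂ)⁻¹ * ∑ j, e j - g) * ((n : ℂ)⁻¹ * ∑ j, e' j - g) * (W : ℂ)
        = (n : ℂ)⁻¹ ^ 2 * ((∑ j, e j) * (∑ j, e' j) * (W : ℂ))
          - (n : ℂ)⁻¹ * ((∑ j, e j) * g * (W : ℂ) + (∑ j, e' j) * g * (W : ℂ))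
          + g * g * (W : ℂ) := by ring
    rw [hz_def, expand]
    have h1 : (∑ j, e j) * (∑ j, e' j) * (W : ℂ) = ∑ j, ∑ k, gw 0 (x j - x k) t := by
      rw [Finset.sum_mul_sum, Finset.sum_mul]
      refine Finset.sum_congr rfl fun j _ => ?_
      rw [Finset.sum_mul]
      refine Finset.sum_congr rfl fun k _ => ?_
      rw [he_def, he'_def]
      have hQ0 : QF (0 : Matrix (Fin 3) (Fin 3) ℝ) t = 0 := by simp [QF]
      unfold gw
      rw [← Complex.exp_add, ← hW_def]
      congr 2
      rw [inner_sub_right, hQ0]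
      push_cast
      ring
    have h2 : (∑ j, e j) * g * (W : ℂ) = ∑ j, gw Γ (x j) t := by
      rw [Finset.sum_mul, Finset.sum_mul]
      refine Finset.sum_congr rfl fun j _ => ?_
      rw [he_def, hg_def]
      unfold gw
      rw [← Complex.exp_add, ← hW_def]
      congr 2
      simp only [QF]
      push_cast
      ring
    have h3 : (∑ j, e' j) * g * (W : ℂ) = ∑ j, gw Γ (-(x j)) t := by
      rw [Finset.sum_mul, Finset.sum_mul]
      refine Finset.sum_congr rfl fun j _ => ?_
      rw [he'_def, hg_def]
      unfold gw
      rw [← Complex.exp_add, ← hW_def]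
      congr 2
      rw [inner_neg_right]
      simp only [QF]
      push_cast
      ring
    have h4 : g * g * (W : ℂ) = gw (2 • Γ) 0 t := by
      rw [hg_def]
      unfold gw
      rw [← Complex.exp_add, ← hW_def]
      congr 2
      rw [inner_zero_right]
      rw [show QF (2 • Γ) t = 2 * QF Γ t from qf_two_smul Γ t]
      simp only [QF]
      push_cast
      ring
    rw [h1, h2, h3, h4, hF_def]
  -- integrability
  have hi0 : ∀ u : E3, Integrable (gw 0 u) := fun u => gw_integrable 0 psd_zero u
  have hiΓ : ∀ u : E3, Integrable (gw Γ u) := fun u => gw_integrable Γ hΓ u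
  have hi2 : Integrable (gw (2 • Γ) 0) := gw_integrable (2 • Γ) (psd_two_smul hΓ) 0
  have hA : Integrable (fun t : E3 => ∑ j, ∑ k, gw 0 (x j - x k) t) :=
    integrable_finset_sum _ fun j _ => integrable_finset_sum _ fun k _ => hi0 _
  have hB : Integrable (fun t : E3 => ∑ j, gw Γ (x j) t) :=
    integrable_finset_sum _ fun j _ => hiΓ _
  have hC : Integrable (fun t : E3 => ∑ j, gw Γ (-(x j)) t) :=
    integrable_finset_sum _ fun j _ => hiΓ _
  have hBC : Integrable (fun t : E3 => (∑ j, gw Γ (x j) t) + ∑ j, gw Γ (-(x j)) t) :=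
    hB.add hC
  have hFint : Integrable F := by
    rw [hF_def]
    exact ((hA.const_mul _).sub (hBC.const_mul _)).add hi2
  -- pass to the complex integral
  simp_rw [hpt]
  have hre : ∫ t : E3, (F t).re = (∫ t : E3, F t).re := by
    rw [← RCLike.re_eq_complex_re]
    exact integral_re hFint
  rw [hre]
  -- compute the complex integral
  have hIF : (∫ t : E3, F t)
      = (n : ℂ)⁻¹ ^ 2 * (∑ j, ∑ k, ∫ t : E3, gw 0 (x j - x k) t)
        - (n : ℂ)⁻¹ * ((∑ j, ∫ t : E3, gw Γ (x j) t) + (∑ j, ∫ t : E3, gw Γ (-(x j)) t))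
        + ∫ t : E3, gw (2 • Γ) 0 t := by
    have step1 : (∫ t : E3, F t)
        = (∫ t : E3, ((n : ℂ)⁻¹ ^ 2 * (∑ j, ∑ k, gw 0 (x j - x k) t)
              - (n : ℂ)⁻¹ * ((∑ j, gw Γ (x j) t) + (∑ j, gw Γ (-(x j)) t))))
            + ∫ t : E3, gw (2 • Γ) 0 t :=
      integral_add ((hA.const_mul _).sub (hBC.const_mul _)) hi2
    rw [step1, integral_sub (hA.const_mul _) (hBC.const_mul _),
      integral_const_mul, integral_const_mul, integral_add hB hC,
      integral_finset_sum _ fun j _ => hiΓ _, integral_finset_sum _ fun j _ => hiΓ _,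
      integral_finset_sum _ fun j _ => integrable_finset_sum _ fun k _ => hi0 _]
    congr 1
    congr 2
    refine Finset.sum_congr rfl fun j _ => ?_
    rw [integral_finset_sum _ fun k _ => hi0 _]
  rw [hIF]
  -- evaluate each integral in closed form
  have m0 : ∀ u : E3, (∫ t : E3, gw 0 u t) = ((Real.exp (-(⟪u, u⟫ : ℝ) / 2) : ℝ) : ℂ) := by
    intro u
    rw [master 0 psd_zero u]
    have h01 : ((0 : Matrix (Fin 3) (Fin 3) ℝ) + 1)⁻¹ = 1 := by rw [zero_add, inv_one]
    rw [h01, Matrix.det_one, Real.sqrt_one, one_mul]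
    have hq : (∑ a, ∑ b, u a * (1 : Matrix (Fin 3) (Fin 3) ℝ) a b * u b) = (⟪u, u⟫ : ℝ) := by
      simp [Matrix.one_apply, PiLp.inner_apply, RCLike.inner_apply, mul_ite, ite_mul]
      exact sum_sq_eq_norm u
    rw [hq]
  have mΓ : ∀ u : E3, (∫ t : E3, gw Γ u t)
      = ((Real.sqrt ((Γ + 1)⁻¹.det) *
          Real.exp (-(∑ a, ∑ b, u a * (Γ + 1)⁻¹ a b * u b) / 2) : ℝ) : ℂ) :=
    fun u => master Γ hΓ u
  have m2 : (∫ t : E3, gw (2 • Γ) 0 t) = ((Real.sqrt ((2 • Γ + 1)⁻¹.det) : ℝ) : ℂ) := by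
    rw [master (2 • Γ) (psd_two_smul hΓ) 0]
    norm_num
  have hqneg : ∀ j, (∑ a, ∑ b, (-(x j)) a * (Γ + 1)⁻¹ a b * (-(x j)) b)
      = ∑ a, ∑ b, (x j) a * (Γ + 1)⁻¹ a b * (x j) b := by
    intro j
    refine Finset.sum_congr rfl fun a _ => Finset.sum_congr rfl fun b _ => ?_
    simp
  simp_rw [m0, mΓ, m2, hqneg]
  have hzr : ∀ (z : ℂ) (r : ℝ), z = (r : ℂ) → z.re = r := fun z r h => by
    rw [h, Complex.ofReal_re]
  refine hzr _ _ ?_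
  push_cast
  simp only [← Finset.mul_sum, neg_div]
  ring
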